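/- arXiv:0803.3981 — 2 statements merged into one kernel-verified Lean document; each statement's English description precedes it below -/
import Mathlib

section
/- Let (Ω, μ) be a sigma-finite measure space, and suppose {f_n}_{n=1}^∞ is a sequence of complex-valued μ-measurable functions on Ω with the following property: there is a positive real constant Θ such that for every positive integer J ≥ 2 and every sequence of positive integers u₁ < u₂ < ⋯ < u_J, one has ‖ { Σ_{j=1}^{J-1} sup_{n ∈ ℕ, u_j ≤ n < u_{j+1}} |f_n − f_{u_{j+1}}|² }^{1/2} ‖_{L^{1,∞}(μ)} ≤ Θ J^{1/4}. Then there exists a μ-measurable function f : Ω → ℂ such that {f_n}_{n=1}^∞ converges to f μ-a.e. on Ω. -/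
/-!
If the sequence failed to be a.e. Cauchy, then for some `ε > 0` it would oscillate by more than `ε`
infinitely often on a set `A` of finite positive measure. By continuity of measure one can then
choose, for each `J`, indices `u₀ < u₁ < ⋯` such that on half of `A` every block `[u_j, u_{j+1}]`
contains an `ε`-oscillation, which forces each of the `J - 1` terms of the square function to exceed
`(ε/2)²`. The weak-`L¹` norm of the square function is then at least of order `√J`, contradicting
the bound `Θ J^{1/4}` for large `J`.
-/

open MeasureTheory Filter
open scoped ENNReal

/-- The weak-`L¹` quasinorm `‖h‖_{L^{1,∞}(ν)} = sup_{y>0} y · ν{|h| > y}`. -/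
noncomputable def weakL1Norm {X : Type*} [MeasurableSpace X] (ν : Measure X) (h : X → ℝ) :
    ℝ≥0∞ :=
  ⨆ (y : ℝ) (_ : 0 < y), ENNReal.ofReal y * ν {x | y < |h x|}

open Topology

section Oscillation

variable {Ω E : Type*} [SeminormedAddCommGroup E]

noncomputable def oscSquareFunction (f : ℕ → Ω → E) (u : ℕ → ℕ) (J : ℕ) (x : Ω) : ℝ :=
  Real.sqrt (∑ j ∈ Finset.range (J - 1),
    ⨆ n ∈ Set.Ico (u j) (u (j + 1)), ‖f n x - f (u (j + 1)) x‖ ^ 2)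

theorem exists_mem_Ico_half_lt_norm_sub {s : ℕ → E} {ε : ℝ} (hε : 0 ≤ ε) {a m b : ℕ}
    (ham : a ≤ m) (hmb : m ≤ b) (hosc : ε < ‖s m - s a‖) :
    ∃ n ∈ Set.Ico a b, ε / 2 < ‖s n - s b‖ := by
  by_cases hab : ε / 2 < ‖s a - s b‖
  · have hne : a ≠ b := by rintro rfl; simp at hab; linarith
    exact ⟨a, ⟨le_rfl, lt_of_le_of_ne (ham.trans hmb) hne⟩, hab⟩
  · have htri := norm_sub_le_norm_sub_add_norm_sub (s m) (s b) (s a)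
    have hmb' : ε / 2 < ‖s m - s b‖ := by rw [norm_sub_rev (s b)] at htri; linarith
    have hne : m ≠ b := by rintro rfl; simp at hmb'; linarith
    exact ⟨m, ⟨ham, lt_of_le_of_ne hmb hne⟩, hmb'⟩

theorem Set.Finite.le_ciSup₂ {α ι : Type*} [ConditionallyCompleteLattice α] {s : Set ι}
    (hs : s.Finite) (g : ι → α) {i : ι} (hi : i ∈ s) : g i ≤ ⨆ k ∈ s, g k := by
  refine _root_.le_ciSup₂ (f := fun k (_ : k ∈ s) => g k) ?_ i hi
  refine (hs.image g).bddAbove.mono ?_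
  rintro _ ⟨_, ⟨k, rfl⟩, ⟨hk, rfl⟩⟩
  exact ⟨k, hk, rfl⟩

theorem mul_sqrt_lt_oscSquareFunction {f : ℕ → Ω → E} {u : ℕ → ℕ} {J : ℕ} (hJ : 2 ≤ J)
    {x : Ω} {c : ℝ} (hc : 0 ≤ c)
    (hblock : ∀ j < J - 1, ∃ n ∈ Set.Ico (u j) (u (j + 1)), c < ‖f n x - f (u (j + 1)) x‖) :
    c * Real.sqrt ((J : ℝ) - 1) < oscSquareFunction f u J x := by
  have hterm : ∀ j ∈ Finset.range (J - 1),
      c ^ 2 < ⨆ n ∈ Set.Ico (u j) (u (j + 1)), ‖f n x - f (u (j + 1)) x‖ ^ 2 := by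
    intro j hj
    obtain ⟨n, hn, hcn⟩ := hblock j (Finset.mem_range.1 hj)
    exact (pow_lt_pow_left₀ hcn hc two_ne_zero).trans_le
      ((Set.finite_Ico _ _).le_ciSup₂ (fun n => ‖f n x - f (u (j + 1)) x‖ ^ 2) hn)
  have hsum := Finset.sum_lt_sum_of_nonempty (Finset.nonempty_range_iff.2 (by omega)) hterm
  have hJ1 : (1 : ℝ) ≤ J := by exact_mod_cast (by omega : 1 ≤ J)
  rw [Finset.sum_const, Finset.card_range, nsmul_eq_mul, Nat.cast_sub (by omega),
    Nat.cast_one] at hsum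
  calc c * Real.sqrt ((J : ℝ) - 1) = Real.sqrt (((J : ℝ) - 1) * c ^ 2) := by
        rw [Real.sqrt_mul (by linarith), Real.sqrt_sq hc, mul_comm]
    _ < oscSquareFunction f u J x := Real.sqrt_lt_sqrt (by positivity) hsum

end Oscillation

section Measure

variable {Ω : Type*} [MeasurableSpace Ω] {μ : Measure Ω}

theorem ofReal_mul_measure_le_weakL1Norm {h : Ω → ℝ} {A : Set Ω} {y : ℝ} (hy : 0 < y)
    (hA : ∀ x ∈ A, y < |h x|) : ENNReal.ofReal y * μ A ≤ weakL1Norm μ h :=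
  le_iSup₂_of_le (f := fun y (_ : 0 < y) => ENNReal.ofReal y * μ {x | y < |h x|}) y hy
    (by gcongr; exact hA)

theorem tendsto_measure_diff_atTop_zero {A : Set Ω} (hA : MeasurableSet A) (hAfin : μ A ≠ ∞)
    {G : ℕ → Set Ω} (hG : ∀ M, MeasurableSet (G M)) (hmono : Monotone G)
    (hcover : A ⊆ ⋃ M, G M) : Tendsto (fun M => μ (A \ G M)) atTop (𝓝 0) := by
  have hlim := tendsto_measure_iInter_atTop (μ := μ) (fun M => (hA.diff (hG M)).nullMeasurableSet)
    (fun M M' h => Set.sdiff_subset_sdiff_right (hmono h))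
    ⟨0, ne_top_of_le_ne_top hAfin (measure_mono Set.sdiff_subset)⟩
  rwa [← Set.sdiff_iUnion, Set.sdiff_eq_empty.2 hcover, measure_empty] at hlim

theorem exists_strictMono_measure_diff_le {A : Set Ω} (hA : MeasurableSet A) (hAfin : μ A ≠ ∞)
    {G : ℕ → ℕ → Set Ω} (hG : ∀ N M, MeasurableSet (G N M)) (hmono : ∀ N, Monotone (G N))
    (hcover : ∀ N, A ⊆ ⋃ M, G N M) {η : ℝ≥0∞} (hη : 0 < η) :
    ∃ u : ℕ → ℕ, StrictMono u ∧ 0 < u 0 ∧ ∀ j, μ (A \ G (u j) (u (j + 1))) ≤ η := by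
  have hnext : ∀ N, ∃ M, N < M ∧ μ (A \ G N M) ≤ η := fun N =>
    ((eventually_gt_atTop N).and ((tendsto_measure_diff_atTop_zero hA hAfin (hG N) (hmono N)
      (hcover N)).eventually (eventually_le_nhds hη))).exists
  choose next hlt hle using hnext
  refine ⟨fun j => next^[j] 1, strictMono_nat_of_lt_succ fun j => ?_, Nat.one_pos, fun j => ?_⟩
  · simp only [Function.iterate_succ_apply']
    exact hlt _
  · simp only [Function.iterate_succ_apply']
    exact hle _

theorem measure_le_measure_setOf_forall_add_sum (A : Set Ω) (G : ℕ → Set Ω) (K : ℕ) :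
    μ A ≤ μ {x ∈ A | ∀ j < K, x ∈ G j} + ∑ j ∈ Finset.range K, μ (A \ G j) := by
  have hcover : A ⊆ {x ∈ A | ∀ j < K, x ∈ G j} ∪ ⋃ j ∈ Finset.range K, A \ G j := by
    intro x hx
    by_cases hall : ∀ j < K, x ∈ G j
    · exact Or.inl ⟨hx, hall⟩
    · push Not at hall
      obtain ⟨j, hj, hxj⟩ := hall
      exact Or.inr (Set.mem_biUnion (Finset.mem_range.2 hj) ⟨hx, hxj⟩)
  exact (measure_mono hcover).trans
    ((measure_union_le _ _).trans (add_le_add le_rfl (measure_biUnion_finset_le _ _)))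

end Measure

theorem exists_mul_rpow_lt_mul_sqrt_sub_one (b : ℝ) {a : ℝ} (ha : 0 < a) :
    ∃ J : ℕ, 2 ≤ J ∧ b * (J : ℝ) ^ ((1 : ℝ) / 4) < a * Real.sqrt ((J : ℝ) - 1) := by
  obtain ⟨M, hM⟩ := exists_nat_gt (max 2 (2 * b / a))
  have hM2 : (2 : ℝ) < M := (le_max_left _ _).trans_lt hM
  have hbM : 2 * b < a * M := by
    have := (le_max_right _ _).trans_lt hM
    rw [div_lt_iff₀ ha] at this
    linarith
  refine ⟨M ^ 4, ?_, ?_⟩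
  · have : 2 < M := by exact_mod_cast hM2
    nlinarith [Nat.pow_le_pow_left this.le 4]
  have hroot : ((M ^ 4 : ℕ) : ℝ) ^ ((1 : ℝ) / 4) = M := by
    rw [Nat.cast_pow, ← Real.rpow_natCast, ← Real.rpow_mul (Nat.cast_nonneg _)]
    norm_num
  have hM4 : (16 : ℝ) ≤ (M : ℝ) ^ 4 := by
    have : (4 : ℝ) ≤ (M : ℝ) ^ 2 := by nlinarith
    nlinarith
  have hsqrt : (M : ℝ) ^ 2 / 2 ≤ Real.sqrt (((M ^ 4 : ℕ) : ℝ) - 1) := by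
    rw [Real.le_sqrt (by positivity) (by push_cast; linarith)]
    push_cast
    linarith
  rw [hroot]
  calc b * M < a * ((M : ℝ) ^ 2 / 2) := by nlinarith
    _ ≤ a * Real.sqrt (((M ^ 4 : ℕ) : ℝ) - 1) := by gcongr

section Convergence

variable {Ω E : Type*} [MeasurableSpace Ω] {μ : Measure Ω} [SeminormedAddCommGroup E]
  {f : ℕ → Ω → E}

theorem exists_ofReal_mul_half_measure_le_weakL1Norm (hmeas : ∀ n, StronglyMeasurable (f n))
    {ε : ℝ} (hε : 0 < ε) {A : Set Ω} (hA : MeasurableSet A) (hA0 : μ A ≠ 0) (hAfin : μ A ≠ ∞)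
    (hAosc : ∀ x ∈ A, ∀ N, ∃ m, N ≤ m ∧ ε < ‖f m x - f N x‖) {J : ℕ} (hJ : 2 ≤ J) :
    ∃ u : ℕ → ℕ, StrictMono u ∧ 0 < u 0 ∧
      ENNReal.ofReal (ε / 2 * Real.sqrt ((J : ℝ) - 1)) * (μ A / 2) ≤
        weakL1Norm μ (oscSquareFunction f u J) := by
  set G : ℕ → ℕ → Set Ω := fun N M => ⋃ m ∈ Finset.Icc N M, {x | ε < ‖f m x - f N x‖}
  have hG : ∀ N M, MeasurableSet (G N M) := fun N M => Finset.measurableSet_biUnion _ fun m _ =>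
    measurableSet_lt measurable_const ((hmeas m).sub (hmeas N)).norm.measurable
  have hmono : ∀ N, Monotone (G N) := fun N M M' h =>
    Set.biUnion_subset_biUnion_left (Finset.coe_subset.2 (Finset.Icc_subset_Icc_right h))
  have hcover : ∀ N, A ⊆ ⋃ M, G N M := fun N x hx => by
    obtain ⟨m, hNm, hm⟩ := hAosc x hx N
    exact Set.mem_iUnion.2 ⟨m, Set.mem_biUnion (Finset.mem_Icc.2 ⟨hNm, le_rfl⟩) hm⟩
  have hK : ((J - 1 : ℕ) : ℝ≥0∞) ≠ 0 := by exact_mod_cast (by omega : J - 1 ≠ 0)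
  -- `η` is chosen so that the `J - 1` bad sets together have measure at most `μ A / 2`.
  obtain ⟨u, hu, hu0, hbad⟩ := exists_strictMono_measure_diff_le hA hAfin hG hmono hcover
    (η := μ A / 2 / (J - 1 : ℕ)) (by simp [ENNReal.div_pos_iff, hA0])
  refine ⟨u, hu, hu0, ?_⟩
  set A' := {x ∈ A | ∀ j < J - 1, x ∈ G (u j) (u (j + 1))}
  have hA' : μ A / 2 ≤ μ A' := by
    have hsum : ∑ j ∈ Finset.range (J - 1), μ (A \ G (u j) (u (j + 1))) ≤ μ A / 2 := by
      refine (Finset.sum_le_card_nsmul _ _ _ fun j _ => hbad j).trans_eq ?_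
      rw [Finset.card_range, nsmul_eq_mul, ENNReal.mul_div_cancel hK (ENNReal.natCast_ne_top _)]
    rw [← ENNReal.sub_half hAfin, tsub_le_iff_right]
    exact (measure_le_measure_setOf_forall_add_sum A (fun j => G (u j) (u (j + 1))) (J - 1)).trans
      (add_le_add le_rfl hsum)
  have hpt : ∀ x ∈ A', ε / 2 * Real.sqrt ((J : ℝ) - 1) < |oscSquareFunction f u J x| := by
    rintro x ⟨-, hx⟩
    refine (mul_sqrt_lt_oscSquareFunction hJ (by positivity) fun j hj => ?_).trans_le
      (le_abs_self _)
    obtain ⟨m, hm, hεm⟩ := Set.mem_iUnion₂.1 (hx j hj)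
    rw [Finset.mem_Icc] at hm
    exact exists_mem_Ico_half_lt_norm_sub hε.le hm.1 hm.2 hεm
  have hJR : (2 : ℝ) ≤ J := by exact_mod_cast hJ
  have hy : 0 < ε / 2 * Real.sqrt ((J : ℝ) - 1) :=
    mul_pos (half_pos hε) (Real.sqrt_pos.2 (by linarith))
  calc _ ≤ ENNReal.ofReal (ε / 2 * Real.sqrt ((J : ℝ) - 1)) * μ A' := by gcongr
    _ ≤ _ := ofReal_mul_measure_le_weakL1Norm hy hpt

theorem ae_exists_forall_norm_sub_le [SigmaFinite μ] (hmeas : ∀ n, StronglyMeasurable (f n))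
    (Θ : ℝ) (hosc : ∀ J, 2 ≤ J → ∀ u : ℕ → ℕ, StrictMono u → 0 < u 0 →
      weakL1Norm μ (oscSquareFunction f u J) ≤ ENNReal.ofReal (Θ * (J : ℝ) ^ ((1 : ℝ) / 4)))
    {ε : ℝ} (hε : 0 < ε) : ∀ᵐ x ∂μ, ∃ N, ∀ m, N ≤ m → ‖f m x - f N x‖ ≤ ε := by
  rw [ae_iff]
  push Not
  set Osc := {x | ∀ N, ∃ m, N ≤ m ∧ ε < ‖f m x - f N x‖}
  have hOsc : MeasurableSet Osc := by
    simp only [Osc, Set.ofPred_forall, Set.ofPred_exists, Set.ofPred_and]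
    exact .iInter fun N => .iUnion fun m => (measurableSet_le measurable_const measurable_const).inter
      (measurableSet_lt measurable_const ((hmeas m).sub (hmeas N)).norm.measurable)
  by_contra hpos
  obtain ⟨k, hk⟩ := (Measure.exists_measure_inter_spanningSets_pos Osc).2 (pos_iff_ne_zero.2 hpos)
  set A := Osc ∩ spanningSets μ k
  have hAfin : μ A ≠ ∞ :=
    ((measure_mono Set.inter_subset_right).trans_lt (measure_spanningSets_lt_top μ k)).ne
  have hhalf : μ A / 2 ≠ ∞ := ENNReal.div_ne_top hAfin two_ne_zero
  have hd : 0 < (μ A / 2).toReal := ENNReal.toReal_pos (by simpa using hk.ne') hhalf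
  obtain ⟨J, hJ, hlt⟩ := exists_mul_rpow_lt_mul_sqrt_sub_one Θ (mul_pos (half_pos hε) hd)
  obtain ⟨u, hu, hu0, hlow⟩ := exists_ofReal_mul_half_measure_le_weakL1Norm hmeas hε
    (hOsc.inter (measurableSet_spanningSets μ k)) hk.ne' hAfin (fun x hx => hx.1) hJ
  have hbound := hlow.trans (hosc J hJ u hu hu0)
  rw [← ENNReal.ofReal_toReal hhalf, ← ENNReal.ofReal_mul (by positivity),
    ENNReal.ofReal_le_ofReal_iff'] at hbound
  have hJR : (2 : ℝ) ≤ J := by exact_mod_cast hJ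
  have hpos : 0 < ε / 2 * Real.sqrt ((J : ℝ) - 1) * (μ A / 2).toReal :=
    mul_pos (mul_pos (half_pos hε) (Real.sqrt_pos.2 (by linarith))) hd
  rcases hbound with hbound | hbound <;> linarith

end Convergence

theorem cauchySeq_of_forall_exists_norm_sub_le_one_div {E : Type*} [SeminormedAddCommGroup E]
    {s : ℕ → E} (h : ∀ k : ℕ, ∃ N, ∀ m, N ≤ m → ‖s m - s N‖ ≤ 1 / ((k : ℝ) + 1)) :
    CauchySeq s := by
  refine Metric.cauchySeq_iff'.2 fun ε hε => ?_
  obtain ⟨k, hk⟩ := exists_nat_one_div_lt hε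
  obtain ⟨N, hN⟩ := h k
  exact ⟨N, fun m hm => by rw [dist_eq_norm]; exact (hN m hm).trans_lt hk⟩

theorem ae_convergence_from_oscillation_general
    {Ω : Type*} [MeasurableSpace Ω] (μ : Measure Ω) [SigmaFinite μ]
    (f : ℕ → Ω → ℂ) (hmeas : ∀ n, Measurable (f n))
    (Θ : ℝ)
    (hosc : ∀ J : ℕ, 2 ≤ J → ∀ u : ℕ → ℕ, 0 < u 0 →
      (∀ i j : ℕ, i < j → j < J → u i < u j) →
      weakL1Norm μ (fun x => Real.sqrt (∑ j ∈ Finset.range (J - 1),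
          ⨆ n ∈ Set.Ico (u j) (u (j + 1)), ‖f n x - f (u (j + 1)) x‖ ^ 2))
        ≤ ENNReal.ofReal (Θ * (J : ℝ) ^ ((1 : ℝ) / 4))) :
    ∃ F : Ω → ℂ, Measurable F ∧
      ∀ᵐ x ∂μ, Tendsto (fun n => f n x) atTop (nhds (F x)) := by
  have hcauchy : ∀ᵐ x ∂μ, ∀ k : ℕ, ∃ N, ∀ m, N ≤ m → ‖f m x - f N x‖ ≤ 1 / ((k : ℝ) + 1) :=
    ae_all_iff.2 fun k => ae_exists_forall_norm_sub_le (fun n => (hmeas n).stronglyMeasurable) Θ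
      (fun J hJ u hu hu0 => hosc J hJ u hu0 fun _ _ hij _ => hu hij) (by positivity)
  have hconv : ∀ᵐ x ∂μ, ∃ l, Tendsto (fun n => f n x) atTop (𝓝 l) := by
    filter_upwards [hcauchy] with x hx
    exact cauchySeq_tendsto_of_complete (cauchySeq_of_forall_exists_norm_sub_le_one_div hx)
  exact measurable_limit_of_tendsto_metrizable_ae (fun n => (hmeas n).aemeasurable) hconv

/-- **Berkson–Demeter, Lemma (oscillation criterion for a.e. convergence).**
Let `(Ω, μ)` be a sigma-finite measure space and `{f_n}` a sequence of complex-valued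
μ-measurable functions on `Ω` such that for some constant `Θ > 0`: for every integer
`J ≥ 2` and all positive integers `u₁ < u₂ < ⋯ < u_J`,
`‖ (∑_{j=1}^{J-1} sup_{u_j ≤ n < u_{j+1}} |f_n − f_{u_{j+1}}|²)^{1/2} ‖_{L^{1,∞}(μ)}
  ≤ Θ · J^{1/4}`.
Then there is a μ-measurable `f : Ω → ℂ` with `f_n → f` μ-a.e. on `Ω`. -/
theorem ae_convergence_from_oscillation
    {Ω : Type*} [MeasurableSpace Ω] (μ : Measure Ω) [SigmaFinite μ]
    (f : ℕ → Ω → ℂ) (hmeas : ∀ n, Measurable (f n))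
    (Θ : ℝ) (hΘ : 0 < Θ)
    (hosc : ∀ J : ℕ, 2 ≤ J → ∀ u : ℕ → ℕ, 0 < u 0 →
      (∀ i j : ℕ, i < j → j < J → u i < u j) →
      weakL1Norm μ (fun x => Real.sqrt (∑ j ∈ Finset.range (J - 1),
          ⨆ n ∈ Set.Ico (u j) (u (j + 1)), ‖f n x - f (u (j + 1)) x‖ ^ 2))
        ≤ ENNReal.ofReal (Θ * (J : ℝ) ^ ((1 : ℝ) / 4))) :
    ∃ F : Ω → ℂ, Measurable F ∧
      ∀ᵐ x ∂μ, Tendsto (fun n => f n x) atTop (nhds (F x)) :=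
  ae_convergence_from_oscillation_general μ f hmeas Θ hosc
end

section
/- Let N ∈ ℕ and suppose {F_j}_{j=1}^N ⊆ L¹(ℝ) is such that for 1 ≤ j ≤ N and each n ∈ ℤ, the restriction F_j|ℐ_n belongs to C¹(ℐ_n). For each n ∈ ℤ let Λ_n = sup{ |(F_j|ℐ_n)′(x)| : 1 ≤ j ≤ N, x ∈ ℐ_n }, and assume Λ ≡ {Λ_n}_{n∈ℤ} ∈ ℓ¹(ℤ). Define S^{(N)}(f,g)(x) = sup_{1≤j≤N} | ∫_ℝ f(x+y) g(x−y) F_j(y) dy | for f, g ∈ L²(ℝ) and x ∈ ℝ, and 𝔖^{(N)}(𝔞,𝔟)(m) = sup_{1≤j≤N} | Σ_{n∈ℤ} 𝔞_{m+n} 𝔟_{m−n} F_j(n) | for 𝔞, 𝔟 ∈ ℓ²(ℤ) and m ∈ ℤ. Let φ₀(u) = 2(1/4 − |u|)·χ_ℐ(u) and φ₁(u) = (1/4 − |u|)²·χ_ℐ(u) for u ∈ ℝ. Then for every pair a, b of finitely supported complex-valued sequences on ℤ, the inequality P_{φ₀}(𝔖^{(N)}(a,b)) ≤ S^{(N)}(Pa,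 Pb) + P_{φ₁}(𝔖_Λ(|a|,|b|)) holds pointwise on ℝ. -/
/-! Fix `x`, let `k` be the integer nearest to `x` and `r = 1/4 - |x - k|`; outside `|x - k| ≤ 1/4`
the left side vanishes. Expanding `Pa(x+y) Pb(x-y)` as a double sum over `m, l`, the product of
windows `χ_ℐ(x+y-m) χ_ℐ(x-y-l)` is the indicator of an interval of radius `1/4 - |m+l-2x|/2`,
which is null unless `m + l = 2k`, and is then `[n - r, n + r]` with `n = m - k`. Hence
`∫ Pa(x+y) Pb(x-y) F(y) dy = ∑ₙ a_{k+n} b_{k-n} ∫_{n-r}^{n+r} F`, while the mean value theorem gives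
`|∫_{n-r}^{n+r} F - 2r F(n)| ≤ r² Λₙ`. The triangle inequality and the maximum over `j` conclude,
since `φ₀(x - k) = 2r` and `φ₁(x - k) = r²`. -/

open MeasureTheory Filter
open scoped ENNReal

/-- The map `P_φ` sending a sequence `{a_n}_{n∈ℤ}` to the function
`x ↦ ∑_{n∈ℤ} φ(x − n) • a_n` on `ℝ`. -/
noncomputable def Pmap {E : Type*} [NormedAddCommGroup E] [NormedSpace ℝ E]
    (φ : ℝ → ℝ) (a : ℤ → E) (x : ℝ) : E :=
  ∑' n : ℤ, φ (x - (n : ℝ)) • a n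

/-- The characteristic function of the interval `ℐ = [-1/4, 1/4]`. -/
noncomputable def chiI : ℝ → ℝ :=
  (Set.Icc (-(1 / 4 : ℝ)) (1 / 4)).indicator fun _ => (1 : ℝ)

/-- `φ₀(u) = 2(1/4 − |u|) χ_ℐ(u)`. -/
noncomputable def phi0 : ℝ → ℝ :=
  (Set.Icc (-(1 / 4 : ℝ)) (1 / 4)).indicator fun u => 2 * (1 / 4 - |u|)

/-- `φ₁(u) = (1/4 − |u|)² χ_ℐ(u)`. -/
noncomputable def phi1 : ℝ → ℝ :=
  (Set.Icc (-(1 / 4 : ℝ)) (1 / 4)).indicator fun u => (1 / 4 - |u|) ^ 2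

open Set

lemma Pmap_eq_smul_round {E : Type*} [NormedAddCommGroup E] [NormedSpace ℝ E] {φ : ℝ → ℝ}
    (hφ : ∀ u, 1 / 2 ≤ |u| → φ u = 0) (f : ℤ → E) (x : ℝ) :
    Pmap φ f x = φ (x - round x) • f (round x) := by
  refine tsum_eq_single _ fun k hk => ?_
  have hk_round : (1 : ℝ) ≤ |(k : ℝ) - round x| := by
    exact_mod_cast Int.one_le_abs (sub_ne_zero.mpr hk)
  have hdist := abs_sub_abs_le_abs_sub ((k : ℝ) - round x) (x - round x)
  rw [show (k : ℝ) - round x - (x - round x) = -(x - k) by ring, abs_neg] at hdist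
  rw [hφ _ (by linarith [abs_sub_round x]), zero_smul]

lemma phi0_of_abs_le {u : ℝ} (hu : |u| ≤ 1 / 4) : phi0 u = 2 * (1 / 4 - |u|) := by
  rw [phi0, indicator_of_mem (mem_Icc.mpr (abs_le.mp hu))]

lemma phi0_of_lt_abs {u : ℝ} (hu : 1 / 4 < |u|) : phi0 u = 0 := by
  rw [phi0, indicator_of_notMem fun h => hu.not_ge (abs_le.mpr (mem_Icc.mp h))]

lemma phi1_of_abs_le {u : ℝ} (hu : |u| ≤ 1 / 4) : phi1 u = (1 / 4 - |u|) ^ 2 := by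
  rw [phi1, indicator_of_mem (mem_Icc.mpr (abs_le.mp hu))]

lemma phi1_of_lt_abs {u : ℝ} (hu : 1 / 4 < |u|) : phi1 u = 0 := by
  rw [phi1, indicator_of_notMem fun h => hu.not_ge (abs_le.mpr (mem_Icc.mp h))]

lemma chiI_sub_eq_indicator (y c : ℝ) :
    chiI (y - c) = (Icc (c - 1 / 4) (c + 1 / 4)).indicator 1 y := by
  have hmem : y - c ∈ Icc (-(1 / 4 : ℝ)) (1 / 4) ↔ y ∈ Icc (c - 1 / 4) (c + 1 / 4) := by
    simp only [mem_Icc]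
    constructor <;> rintro ⟨h₁, h₂⟩ <;> constructor <;> linarith
  simp only [chiI, indicator_apply, hmem, Pi.one_apply]

lemma chiI_neg (u : ℝ) : chiI (-u) = chiI u := by
  have hmem : -u ∈ Icc (-(1 / 4 : ℝ)) (1 / 4) ↔ u ∈ Icc (-(1 / 4 : ℝ)) (1 / 4) := by
    simp only [mem_Icc]
    constructor <;> rintro ⟨h₁, h₂⟩ <;> constructor <;> linarith
  simp only [chiI, indicator_apply, hmem]

lemma Icc_inter_Icc_eq_Icc_midpoint (c₁ c₂ δ : ℝ) :
    Icc (c₁ - δ) (c₁ + δ) ∩ Icc (c₂ - δ) (c₂ + δ) =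
      Icc ((c₁ + c₂) / 2 - (δ - |c₁ - c₂| / 2)) ((c₁ + c₂) / 2 + (δ - |c₁ - c₂| / 2)) := by
  rw [Icc_inter_Icc]
  rcases le_total c₂ c₁ with h | h
  · rw [max_eq_left (by linarith), min_eq_right (by linarith), abs_of_nonneg (by linarith)]
    congr 1 <;> ring
  · rw [max_eq_right (by linarith), min_eq_left (by linarith), abs_of_nonpos (by linarith)]
    congr 1 <;> ring

lemma chiI_mul_chiI_mul_eq_indicator (f : ℝ → ℝ) (x y : ℝ) (m l : ℤ) :
    chiI (x + y - m) * chiI (x - y - l) * f y =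
      (Icc (((m : ℝ) - l) / 2 - (1 / 4 - |(m : ℝ) + l - 2 * x| / 2))
        (((m : ℝ) - l) / 2 + (1 / 4 - |(m : ℝ) + l - 2 * x| / 2))).indicator f y := by
  rw [show x + y - m = y - (m - x) by ring, show x - y - l = -(y - (x - l)) by ring, chiI_neg,
    chiI_sub_eq_indicator, chiI_sub_eq_indicator, ← Pi.mul_apply (f := (Icc _ _).indicator 1),
    ← inter_indicator_one, Icc_inter_Icc_eq_Icc_midpoint,
    show ((m : ℝ) - x + (x - l)) / 2 = ((m : ℝ) - l) / 2 by ring, show (m : ℝ) - x - (x - l) = m + l - 2 * x by ring]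
  by_cases hy : y ∈ Icc (((m : ℝ) - l) / 2 - (1 / 4 - |(m : ℝ) + l - 2 * x| / 2))
      (((m : ℝ) - l) / 2 + (1 / 4 - |(m : ℝ) + l - 2 * x| / 2))
  · rw [indicator_of_mem hy, indicator_of_mem hy, Pi.one_apply, one_mul]
  · rw [indicator_of_notMem hy, indicator_of_notMem hy, zero_mul]

/-- Unless `m + l = 2k`, the interval cut out in `chiI_mul_chiI_mul_eq_indicator` is null, because
then `|m + l - 2x| ≥ 1 - 2|x - k| ≥ 1/2`. -/
lemma setIntegral_window_eq_ite (f : ℝ → ℝ) {x : ℝ} {k : ℤ} (hk : |x - k| ≤ 1 / 4) (m l : ℤ) :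
    ∫ y in Icc (((m : ℝ) - l) / 2 - (1 / 4 - |(m : ℝ) + l - 2 * x| / 2))
        (((m : ℝ) - l) / 2 + (1 / 4 - |(m : ℝ) + l - 2 * x| / 2)), f y =
      if l = 2 * k - m then
        ∫ y in Icc (((m - k : ℤ) : ℝ) - (1 / 4 - |x - k|)) ((m - k : ℤ) + (1 / 4 - |x - k|)), f y
      else 0 := by
  split_ifs with hl
  · subst hl
    push_cast
    rw [show (m : ℝ) + (2 * k - m) - 2 * x = -(2 * (x - k)) by ring, abs_neg, abs_mul, abs_two]
    congr 3 <;> ring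
  · refine setIntegral_measure_zero _ ?_
    have hml : (1 : ℝ) ≤ |((m + l - 2 * k : ℤ) : ℝ)| := by
      exact_mod_cast Int.one_le_abs (by omega)
    have hdist := abs_sub_abs_le_abs_sub ((m + l - 2 * k : ℤ) : ℝ) (2 * (x - k))
    rw [abs_mul, abs_two, show ((m + l - 2 * k : ℤ) : ℝ) - 2 * (x - k) = m + l - 2 * x by
      push_cast; ring] at hdist
    rw [Real.volume_Icc, ENNReal.ofReal_eq_zero]
    linarith

lemma integral_Pmap_chiI_mul_Pmap_chiI {f : ℝ → ℝ} (hf : Integrable f) {a b : ℤ → ℂ}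
    {A : Finset ℤ} (ha : Function.support a ⊆ A) (hb : (Function.support b).Finite) {x : ℝ}
    {k : ℤ} (hk : |x - k| ≤ 1 / 4) :
    ∫ y, Pmap chiI a (x + y) * Pmap chiI b (x - y) * (f y : ℂ) =
      ∑ m ∈ A, a m * b (2 * k - m) * ((∫ y in Icc (((m - k : ℤ) : ℝ) - (1 / 4 - |x - k|))
        ((m - k : ℤ) + (1 / 4 - |x - k|)), f y : ℝ) : ℂ) := by
  set B := hb.toFinset
  have hPa : ∀ u, Pmap chiI a u = ∑ m ∈ A, chiI (u - m) • a m := fun u =>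
    tsum_eq_sum fun m hm => by rw [Function.notMem_support.mp fun h => hm (ha h), smul_zero]
  have hPb : ∀ u, Pmap chiI b u = ∑ l ∈ B, chiI (u - l) • b l := fun u =>
    tsum_eq_sum fun l hl => by
      rw [Function.notMem_support.mp fun h => hl (hb.mem_toFinset.mpr h), smul_zero]
  have hterm : ∀ m l : ℤ,
      ∫ y, a m * b l * ((chiI (x + y - m) * chiI (x - y - l) * f y : ℝ) : ℂ) = if l = 2 * k - m then a m * b l * ((∫ y in Icc (((m - k : ℤ) : ℝ) - (1 / 4 - |x - k|))
        ((m - k : ℤ) + (1 / 4 - |x - k|)), f y : ℝ) : ℂ) else 0 := fun m l => by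
    rw [integral_const_mul, integral_complex_ofReal]
    simp only [chiI_mul_chiI_mul_eq_indicator f x _ m l]
    rw [integral_indicator measurableSet_Icc, setIntegral_window_eq_ite f hk m l]
    split_ifs <;> simp
  have hint : ∀ m l : ℤ,
      Integrable fun y => a m * b l * ((chiI (x + y - m) * chiI (x - y - l) * f y : ℝ) : ℂ) :=
    fun m l => by
      simp only [chiI_mul_chiI_mul_eq_indicator f x _ m l]
      exact ((hf.indicator measurableSet_Icc).ofReal).const_mul _
  calc ∫ y, Pmap chiI a (x + y) * Pmap chiI b (x - y) * (f y : ℂ)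
      = ∫ y, ∑ m ∈ A, ∑ l ∈ B,
          a m * b l * ((chiI (x + y - m) * chiI (x - y - l) * f y : ℝ) : ℂ) := by
        congr 1 with y
        rw [hPa, hPb, Finset.sum_mul_sum, Finset.sum_mul]
        refine Finset.sum_congr rfl fun m _ => ?_
        rw [Finset.sum_mul]
        refine Finset.sum_congr rfl fun l _ => ?_
        simp only [Complex.real_smul, Complex.ofReal_mul]
        ring
    _ = ∑ m ∈ A, ∑ l ∈ B, if l = 2 * k - m then a m * b l * ((∫ y in Icc (((m - k : ℤ) : ℝ) -
          (1 / 4 - |x - k|)) ((m - k : ℤ) + (1 / 4 - |x - k|)), f y : ℝ) : ℂ) else 0 := by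
        rw [integral_finsetSum _ fun m _ => integrable_finsetSum _ fun l _ => hint m l]
        simp only [integral_finsetSum _ fun l _ => hint _ l, hterm]
    _ = _ := by
        refine Finset.sum_congr rfl fun m _ => ?_
        rw [Finset.sum_ite_eq']
        split_ifs with hm
        · rfl
        · rw [Function.notMem_support.mp fun h => hm (hb.mem_toFinset.mpr h), mul_zero, zero_mul]

lemma integral_abs_sub_Icc (c ρ : ℝ) (hρ : 0 ≤ ρ) :
    ∫ s in Icc (c - ρ) (c + ρ), |s - c| = ρ ^ 2 := by
  rw [integral_Icc_eq_integral_Ioc, ← intervalIntegral.integral_of_le (by linarith),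
    intervalIntegral.integral_comp_sub_right (fun u => |u|) c, sub_sub_cancel_left,
    add_sub_cancel_left]
  have hint : ∀ p q : ℝ, IntervalIntegrable (fun u => |u|) volume p q := fun p q =>
    continuous_abs.intervalIntegrable p q
  rw [← intervalIntegral.integral_add_adjacent_intervals (hint (-ρ) 0) (hint 0 ρ),
    intervalIntegral.integral_congr (g := fun u => -u) fun u hu => abs_of_nonpos ?_,
    intervalIntegral.integral_congr (g := fun u => u) fun u hu => abs_of_nonneg ?_,
    intervalIntegral.integral_neg, integral_id, integral_id]
  · ring
  · exact (uIcc_of_le hρ ▸ hu).1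
  · exact (uIcc_of_le (neg_nonpos.mpr hρ) ▸ hu).2

lemma abs_setIntegral_Icc_sub_two_mul_le {f : ℝ → ℝ} {c ρ L : ℝ} (hρ : 0 ≤ ρ)
    (hf : IntegrableOn f (Icc (c - ρ) (c + ρ)))
    (hL : ∀ s ∈ Icc (c - ρ) (c + ρ), |f s - f c| ≤ L * |s - c|) :
    |(∫ s in Icc (c - ρ) (c + ρ), f s) - 2 * ρ * f c| ≤ L * ρ ^ 2 := by
  have hconst : ∫ _ in Icc (c - ρ) (c + ρ), f c = 2 * ρ * f c := by
    rw [setIntegral_const, measureReal_def, Real.volume_Icc, ENNReal.toReal_ofReal (by linarith),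
      smul_eq_mul]
    ring
  calc |(∫ s in Icc (c - ρ) (c + ρ), f s) - 2 * ρ * f c|
      = |∫ s in Icc (c - ρ) (c + ρ), (f s - f c)| := by
        rw [integral_sub hf (integrableOn_const (by simp)), hconst]
    _ ≤ ∫ s in Icc (c - ρ) (c + ρ), |f s - f c| := abs_integral_le_integral_abs
    _ ≤ ∫ s in Icc (c - ρ) (c + ρ), L * |s - c| :=
        setIntegral_mono_on (hf.sub (integrableOn_const (by simp))).abs
          (by fun_prop : Continuous fun s => L * |s - c|).integrableOn_Icc measurableSet_Icc hL
    _ = L * ρ ^ 2 := by rw [integral_const_mul, integral_abs_sub_Icc c ρ hρ]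

lemma tsum_mul_mul_eq_sum {R : Type*} [NonUnitalNonAssocSemiring R] [TopologicalSpace R]
    {a : ℤ → R} {A : Finset ℤ} (ha : Function.support a ⊆ A) (b c : ℤ → R) (k : ℤ) :
    ∑' n, a (k + n) * b (k - n) * c n = ∑ m ∈ A, a m * b (2 * k - m) * c (m - k) := by
  rw [← (Equiv.subRight k).tsum_eq, tsum_eq_sum fun m hm => ?_]
  · refine Finset.sum_congr rfl fun m _ => ?_
    rw [Equiv.subRight_apply, add_sub_cancel, show k - (m - k) = 2 * k - m by ring]
  · rw [Equiv.subRight_apply, add_sub_cancel, Function.notMem_support.mp fun h => hm (ha h),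
      zero_mul, zero_mul]

lemma norm_sum_mul_le_norm_sum_mul_add {ι R : Type*} [NormedRing R] (s : Finset ι)
    (z u v : ι → R) :
    ‖∑ i ∈ s, z i * u i‖ ≤ ‖∑ i ∈ s, z i * v i‖ + ∑ i ∈ s, ‖z i‖ * ‖u i - v i‖ := by
  calc ‖∑ i ∈ s, z i * u i‖ = ‖∑ i ∈ s, z i * v i + ∑ i ∈ s, z i * (u i - v i)‖ := by
        rw [← Finset.sum_add_distrib]; simp only [mul_sub, add_sub_cancel]
    _ ≤ ‖∑ i ∈ s, z i * v i‖ + ‖∑ i ∈ s, z i * (u i - v i)‖ := norm_add_le _ _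
    _ ≤ ‖∑ i ∈ s, z i * v i‖ + ∑ i ∈ s, ‖z i‖ * ‖u i - v i‖ := by
        gcongr
        exact (norm_sum_le _ _).trans (Finset.sum_le_sum fun i _ => norm_mul_le _ _)

lemma bddAbove_range_iSup_mem {ι : Type*} (s : Finset ι) (g : ι → ℝ) :
    BddAbove (range fun i => ⨆ _ : i ∈ s, g i) := by
  refine ⟨∑ i ∈ s, |g i|, ?_⟩
  rintro _ ⟨i, rfl⟩
  exact Real.iSup_le (fun hi => (le_abs_self _).trans
    (Finset.single_le_sum (fun j _ => abs_nonneg (g j)) hi))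
    (Finset.sum_nonneg fun j _ => abs_nonneg _)

lemma mul_biSup_le_biSup_add {ι : Type*} (s : Finset ι) {f g : ι → ℝ} {c d : ℝ} (hc : 0 ≤ c)
    (hd : 0 ≤ d) (hg : ∀ i ∈ s, 0 ≤ g i) (h : ∀ i ∈ s, c * f i ≤ g i + d) :
    c * ⨆ i ∈ s, f i ≤ (⨆ i ∈ s, g i) + d := by
  have hg_le : ∀ i ∈ s, g i ≤ ⨆ i ∈ s, g i := fun i hi =>
    le_ciSup_of_le (bddAbove_range_iSup_mem s g) i (ciSup_pos (f := fun _ => g i) hi).ge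
  have hsup : 0 ≤ (⨆ i ∈ s, g i) + d :=
    add_nonneg (Real.iSup_nonneg fun i => Real.iSup_nonneg fun hi => hg i hi) hd
  rw [Real.mul_iSup_of_nonneg hc]
  refine Real.iSup_le (fun i => ?_) hsup
  rw [Real.mul_iSup_of_nonneg hc]
  exact Real.iSup_le (fun hi => (h i hi).trans (by gcongr; exact hg_le i hi)) hsup

lemma abs_derivWithin_le_sSup {F : ℕ → ℝ → ℝ} {N : ℕ} {p q : ℝ} (hpq : p < q)
    (hF : ∀ j < N, ContDiffOn ℝ 1 (F j) (Icc p q)) {j : ℕ} (hj : j < N) {y : ℝ}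
    (hy : y ∈ Icc p q) :
    |derivWithin (F j) (Icc p q) y| ≤
      sSup {r : ℝ | ∃ j < N, ∃ x ∈ Icc p q, r = |derivWithin (F j) (Icc p q) x|} := by
  refine le_csSup (BddAbove.mono ?_ ((finite_Iio N).bddAbove_biUnion.mpr fun j hj =>
    (isCompact_Icc.image_of_continuousOn ((hF j hj).continuousOn_derivWithin
      (uniqueDiffOn_Icc hpq) le_rfl).abs).bddAbove)) ⟨j, hj, y, hy, rfl⟩
  rintro _ ⟨j, hj, x, hx, rfl⟩
  exact mem_biUnion hj ⟨x, hx, rfl⟩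

theorem two_mul_norm_tsum_le_norm_integral_add {f : ℝ → ℝ} (hf : Integrable f) {Λ : ℤ → ℝ}
    (hfd : ∀ n : ℤ, DifferentiableOn ℝ f (Icc ((n : ℝ) - 1 / 4) ((n : ℝ) + 1 / 4)))
    (hΛ : ∀ n : ℤ, ∀ y ∈ Icc ((n : ℝ) - 1 / 4) ((n : ℝ) + 1 / 4),
      |derivWithin f (Icc ((n : ℝ) - 1 / 4) ((n : ℝ) + 1 / 4)) y| ≤ Λ n)
    {a b : ℤ → ℂ} (ha : (Function.support a).Finite) (hb : (Function.support b).Finite)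
    {x : ℝ} {k : ℤ} (hk : |x - k| ≤ 1 / 4) :
    2 * (1 / 4 - |x - k|) * ‖∑' n : ℤ, a (k + n) * b (k - n) * (f n : ℂ)‖ ≤
      ‖∫ y, Pmap chiI a (x + y) * Pmap chiI b (x - y) * (f y : ℂ)‖ +
        (1 / 4 - |x - k|) ^ 2 * ∑' n : ℤ, ‖a (k + n)‖ * ‖b (k - n)‖ * Λ n := by
  set r := 1 / 4 - |x - k| with hr
  have hr0 : 0 ≤ r := by linarith
  set I : ℤ → ℝ := fun n => ∫ y in Icc ((n : ℝ) - r) (n + r), f y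
  have hmid : ∀ n : ℤ, |I n - 2 * r * f n| ≤ Λ n * r ^ 2 := fun n =>
    abs_setIntegral_Icc_sub_two_mul_le hr0 hf.integrableOn fun s hs => by
      have hsub : Icc ((n : ℝ) - r) (n + r) ⊆ Icc ((n : ℝ) - 1 / 4) ((n : ℝ) + 1 / 4) :=
        Icc_subset_Icc (by linarith [abs_nonneg (x - k)]) (by linarith [abs_nonneg (x - k)])
      simpa only [Real.norm_eq_abs] using (convex_Icc _ _).norm_image_sub_le_of_norm_derivWithin_le
        (hfd n) (fun y hy => (Real.norm_eq_abs _).trans_le (hΛ n y hy))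
        (hsub ⟨by linarith, by linarith⟩) (hsub hs)
  set A := ha.toFinset
  have hA : Function.support a ⊆ A := ha.coe_toFinset.ge
  have hA' : Function.support (fun n => ‖a n‖) ⊆ A := fun n hn => hA (norm_ne_zero_iff.mp hn)
  have hnorm := tsum_mul_mul_eq_sum hA' (fun n => ‖b n‖) Λ k
  beta_reduce at hnorm
  rw [tsum_mul_mul_eq_sum hA, hnorm, integral_Pmap_chiI_mul_Pmap_chiI hf hA hb hk,
    Finset.mul_sum]
  calc 2 * r * ‖∑ m ∈ A, a m * b (2 * k - m) * (f (m - k : ℤ) : ℂ)‖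
      = ‖((2 * r : ℝ) : ℂ) * ∑ m ∈ A, a m * b (2 * k - m) * (f (m - k : ℤ) : ℂ)‖ := by
        rw [norm_mul, Complex.norm_real, Real.norm_of_nonneg (by positivity)]
    _ = ‖∑ m ∈ A, a m * b (2 * k - m) * ((2 * r * f (m - k : ℤ) : ℝ) : ℂ)‖ := by
        rw [Finset.mul_sum]
        exact congrArg _ (Finset.sum_congr rfl fun m _ => by push_cast; ring)
    _ ≤ ‖∑ m ∈ A, a m * b (2 * k - m) * (I (m - k) : ℂ)‖ +
          ∑ m ∈ A, ‖a m * b (2 * k - m)‖ * ‖((2 * r * f (m - k : ℤ) : ℝ) : ℂ) - I (m - k)‖ :=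
        norm_sum_mul_le_norm_sum_mul_add _ _ _ _
    _ ≤ ‖∑ m ∈ A, a m * b (2 * k - m) * (I (m - k) : ℂ)‖ +
          ∑ m ∈ A, r ^ 2 * (‖a m‖ * ‖b (2 * k - m)‖ * Λ (m - k)) := by
        refine add_le_add_right (Finset.sum_le_sum fun m _ => ?_) _
        rw [norm_mul, ← Complex.ofReal_sub, Complex.norm_real, Real.norm_eq_abs, abs_sub_comm]
        calc ‖a m‖ * ‖b (2 * k - m)‖ * |I (m - k) - 2 * r * f (m - k : ℤ)|
            ≤ ‖a m‖ * ‖b (2 * k - m)‖ * (Λ (m - k) * r ^ 2) := by gcongr; exact hmid _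
          _ = r ^ 2 * (‖a m‖ * ‖b (2 * k - m)‖ * Λ (m - k)) := by ring

theorem discretization_of_maximal_functions_general
    (N : ℕ) (F : ℕ → ℝ → ℝ)
    (hFL1 : ∀ j < N, Integrable (F j) volume)
    (hFC1 : ∀ j < N, ∀ n : ℤ,
      ContDiffOn ℝ 1 (F j) (Set.Icc ((n : ℝ) - 1 / 4) ((n : ℝ) + 1 / 4)))
    (Λ : ℤ → ℝ)
    (hΛ : ∀ n : ℤ, Λ n = sSup {r : ℝ | ∃ j < N, ∃ x ∈ Set.Icc ((n : ℝ) - 1 / 4) ((n : ℝ) + 1 / 4),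
      r = |derivWithin (F j) (Set.Icc ((n : ℝ) - 1 / 4) ((n : ℝ) + 1 / 4)) x|})
    (a b : ℤ → ℂ) (ha : (Function.support a).Finite) (hb : (Function.support b).Finite) :
    ∀ x : ℝ,
      Pmap phi0 (fun k : ℤ => ⨆ j ∈ Finset.range N,
          Norm.norm (∑' n : ℤ, a (k + n) * b (k - n) * (F j (n : ℝ) : ℂ))) x
        ≤ (⨆ j ∈ Finset.range N,
            Norm.norm (∫ y : ℝ, Pmap chiI a (x + y) * Pmap chiI b (x - y) * (F j y : ℂ))) +
          Pmap phi1 (fun n : ℤ => ∑' k : ℤ,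
            Norm.norm (a (n + k)) * Norm.norm (b (n - k)) * Λ k) x := by
  intro x
  have hΛ_nonneg : ∀ n, 0 ≤ Λ n := fun n =>
    hΛ n ▸ Real.sSup_nonneg (by rintro _ ⟨j, -, y, -, rfl⟩; exact abs_nonneg _)
  rw [Pmap_eq_smul_round (fun u hu => phi0_of_lt_abs (by linarith)),
    Pmap_eq_smul_round (fun u hu => phi1_of_lt_abs (by linarith)), smul_eq_mul, smul_eq_mul]
  rcases le_or_gt |x - round x| (1 / 4) with hx | hx
  · rw [phi0_of_abs_le hx, phi1_of_abs_le hx]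
    refine mul_biSup_le_biSup_add _ (by linarith) ?_ (fun _ _ => norm_nonneg _) fun j hj => ?_
    · exact mul_nonneg (sq_nonneg _) (tsum_nonneg fun n => by have := hΛ_nonneg n; positivity)
    have hj : j < N := Finset.mem_range.mp hj
    exact two_mul_norm_tsum_le_norm_integral_add (hFL1 j hj)
      (fun n => (hFC1 j hj n).differentiableOn one_ne_zero)
      (fun n y hy =>
        hΛ n ▸ abs_derivWithin_le_sSup (by linarith) (fun j hj => hFC1 j hj n) hj hy)
      ha hb hx
  · rw [phi0_of_lt_abs hx, phi1_of_lt_abs hx, zero_mul, zero_mul, add_zero]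
    exact Real.iSup_nonneg fun j => Real.iSup_nonneg fun _ => norm_nonneg _

/-- **BBCG, Lemma 3 (discretization of maximal functions).**
Let `{F_j}_{j=1}^N ⊆ L¹(ℝ)` with each restriction `F_j|ℐ_n` of class `C¹` on
`ℐ_n = [n − 1/4, n + 1/4]`, let `Λ_n` be the supremum of `|(F_j|ℐ_n)′|` over `1 ≤ j ≤ N`
and `x ∈ ℐ_n`, and assume `Λ ∈ ℓ¹(ℤ)`.  Then for all finitely supported complex
sequences `a, b` on `ℤ`, pointwise on `ℝ`:
`P_{φ₀}(𝔖^{(N)}(a,b)) ≤ S^{(N)}(Pa, Pb) + P_{φ₁}(𝔖_Λ(|a|,|b|))`. -/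
theorem discretization_of_maximal_functions
    (N : ℕ) (hN : 0 < N) (F : ℕ → ℝ → ℝ)
    (hFL1 : ∀ j < N, Integrable (F j) volume)
    (hFC1 : ∀ j < N, ∀ n : ℤ,
      ContDiffOn ℝ 1 (F j) (Set.Icc ((n : ℝ) - 1 / 4) ((n : ℝ) + 1 / 4)))
    (Λ : ℤ → ℝ)
    (hΛ : ∀ n : ℤ, Λ n = sSup {r : ℝ | ∃ j < N, ∃ x ∈ Set.Icc ((n : ℝ) - 1 / 4) ((n : ℝ) + 1 / 4),
      r = |derivWithin (F j) (Set.Icc ((n : ℝ) - 1 / 4) ((n : ℝ) + 1 / 4)) x|})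
    (hΛl1 : Summable fun n : ℤ => |Λ n|)
    (a b : ℤ → ℂ) (ha : (Function.support a).Finite) (hb : (Function.support b).Finite) :
    ∀ x : ℝ,
      Pmap phi0 (fun k : ℤ => ⨆ j ∈ Finset.range N,
          Norm.norm (∑' n : ℤ, a (k + n) * b (k - n) * (F j (n : ℝ) : ℂ))) x
        ≤ (⨆ j ∈ Finset.range N,
            Norm.norm (∫ y : ℝ, Pmap chiI a (x + y) * Pmap chiI b (x - y) * (F j y : ℂ))) +
          Pmap phi1 (fun n : ℤ => ∑' k : ℤ,
            Norm.norm (a (n + k)) * Norm.norm (b (n - k)) * Λ k) x :=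
  discretization_of_maximal_functions_general N F hFL1 hFC1 Λ hΛ a b ha hb
end
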